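/- Let V be a weighted digraph with φ_{k-1} - φ_k > φ_k - φ_{k+1}, and let M be a marked atom of A_k (an atom containing a root of some minimal-weight spanning k-forest). Then there exists a minimal-weight spanning k-forest one of whose trees has vertex set exactly M, and no minimal-weight spanning k-forest contains an arc with origin in M and terminus outside M. -/

import Mathlib

open Relation

/-- The arc relation of a functional digraph: `F i = some j` means there is an arc `i → j`. -/
def Arc {V : Type*} (F : V → Option V) (i j : V) : Prop := F i = some j

/-- A directed forest: a functional digraph (out-degree ≤ 1) without directed circuits. -/
def IsForest {V : Type*} (F : V → Option V) : Prop :=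
  ∀ i, ¬ Relation.TransGen (Arc F) i i

/-- `j` is accessible from `i` by a directed walk. -/
def Reaches {V : Type*} (F : V → Option V) (i j : V) : Prop :=
  Relation.ReflTransGen (Arc F) i j

open Classical in
/-- The `D`-exchange of `F` by `G`: replace the outgoing arcs (in `F`) of vertices of `D`
by their outgoing arcs in `G`. -/
noncomputable def exchange {V : Type*} (D : Set V) (F G : V → Option V) : V → Option V :=
  fun i => if i ∈ D then G i else F i

/-- The set of vertices of the tree of the forest `F` with root `r`. -/
def treeSet {V : Type*} (F : V → Option V) (r : V) : Set V := {i | Reaches F i r}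

section Weighted

variable {V : Type*} [Fintype V] [DecidableEq V]

/-- A spanning forest of the digraph with arc relation `A`. -/
def IsSpanningForest (A : V → V → Prop) (F : V → Option V) : Prop :=
  IsForest F ∧ ∀ i j, F i = some j → A i j

/-- The number of trees (= roots) of a forest. -/
def numTrees (F : V → Option V) : ℕ :=
  (Finset.univ.filter (fun i => F i = none)).card

/-- The weight of a forest: the sum of the weights of its arcs. -/
noncomputable def weight (w : V → V → ℝ) (F : V → Option V) : ℝ :=
  ∑ i, (F i).elim 0 (w i)

/-- `F` is a minimal-weight (extreme) spanning forest with `k` trees. -/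
def ExtremeForest (A : V → V → Prop) (w : V → V → ℝ) (k : ℕ) (F : V → Option V) : Prop :=
  IsSpanningForest A F ∧ numTrees F = k ∧
    ∀ G, IsSpanningForest A G → numTrees G = k → weight w F ≤ weight w G

/-- `φ_k`: the minimum weight of a spanning forest with exactly `k` trees. -/
noncomputable def phi (A : V → V → Prop) (w : V → V → ℝ) (k : ℕ) : ℝ :=
  sInf (weight w '' {F | IsSpanningForest A F ∧ numTrees F = k})

end Weighted

section Algebras

variable {V : Type*} [Fintype V] [DecidableEq V]

/-- The generating family of `A_k`: vertex sets of trees of minimal-weight spanning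
`k`-forests. -/
def genSets (A : V → V → Prop) (w : V → V → ℝ) (k : ℕ) : Set (Set V) :=
  {S | ∃ F r, ExtremeForest A w k F ∧ F r = none ∧ S = treeSet F r}

/-- The algebra `A_k` of subsets of the vertex set generated by the vertex sets of trees of
minimal-weight spanning `k`-forests. -/
noncomputable def alg (A : V → V → Prop) (w : V → V → ℝ) (k : ℕ) : MeasurableSpace V :=
  MeasurableSpace.generateFrom (genSets A w k)

/-- `E` is an elementary set (atom) of the algebra `m`. -/
def IsElementary (m : MeasurableSpace V) (E : Set V) : Prop :=
  @MeasurableSet V m E ∧ E.Nonempty ∧ ∀ S, @MeasurableSet V m S → S ⊆ E → S = ∅ ∨ S = E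

/-- `i` is a marked vertex of level `k`: a root of some minimal-weight spanning `k`-forest. -/
def IsMarked (A : V → V → Prop) (w : V → V → ℝ) (k : ℕ) (i : V) : Prop :=
  ∃ F, ExtremeForest A w k F ∧ F i = none

end Algebras

/-!
Exchange argument. Let `H`, `G` be minimal spanning `k`-forests and `U` the vertex set of a tree
of `H`. Giving the vertices of `U` their `G`-arcs (and, in a second forest, the other vertices
their `G`-arcs) produces two spanning forests whose weights add up to `2 φ_k` and whose numbers
of trees add up to `2k`. If `U` contained no root of `G` these would be a `(k-1)`- and a
`(k+1)`-forest, contradicting `φ_{k-1} + φ_{k+1} > 2 φ_k`; by counting, every tree of `H` then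
contains exactly one root of `G`, and both exchanged forests are again minimal `k`-forests.

Let `i₀ ∈ M` be marked and `U ∋ i₀` a tree of `H`. In the exchanged forest the tree of `i₀` has
its root in `U`, for otherwise it would contain two roots of a minimal forest in which `i₀` is a
root. Hence this tree lies in `U` and in the `G`-tree of `i₀`. Taking for `U` a minimal generator
of `A_k` containing `i₀` forces `U = M`; taking `U = M` shows that `G` has no arc leaving `M`.
-/

section Paths

variable {V : Type*} {F : V → Option V}

lemma arc_rightUnique (F : V → Option V) : Relator.RightUnique (Arc F) :=
  fun _ _ _ h₁ h₂ => Option.some_injective _ (h₁.symm.trans h₂)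

lemma eq_of_reaches_of_eq_none {r i : V} (hr : F r = none) (h : Reaches F r i) : r = i := by
  rcases h.cases_head with h | ⟨_, hrc, _⟩
  · exact h
  · simp [Arc, hr] at hrc

lemma root_unique {i r₁ r₂ : V} (h₁ : Reaches F i r₁) (h₂ : Reaches F i r₂)
    (hr₁ : F r₁ = none) (hr₂ : F r₂ = none) : r₁ = r₂ := by
  rcases ReflTransGen.total_of_right_unique (arc_rightUnique F) h₁ h₂ with h | h
  · exact eq_of_reaches_of_eq_none hr₁ h
  · exact (eq_of_reaches_of_eq_none hr₂ h).symm

lemma IsForest.exists_root [Finite V] (hF : IsForest F) (i : V) :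
    ∃ r, F r = none ∧ Reaches F i r := by
  have : IsTrans V (fun a b => TransGen (Arc F) b a) := ⟨fun _ _ _ hab hbc => hbc.trans hab⟩
  have : Std.Irrefl (fun a b : V => TransGen (Arc F) b a) := ⟨hF⟩
  have wf := Finite.wellFounded_of_trans_of_irrefl fun a b : V => TransGen (Arc F) b a
  induction i using WellFounded.induction wf with
  | _ i ih =>
    cases hi : F i with
    | none => exact ⟨i, hi, .refl⟩
    | some j =>
      obtain ⟨r, hr, hjr⟩ := ih j (.single hi)
      exact ⟨r, hr, .head hi hjr⟩

lemma treeSet_closed {r i j : V} (hr : F r = none) (hi : i ∈ treeSet F r) (hij : Arc F i j) :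
    j ∈ treeSet F r := by
  rcases ReflTransGen.cases_head hi with rfl | ⟨c, hic, hcr⟩
  · simp [Arc, hr] at hij
  · rwa [arc_rightUnique F hij hic]

lemma treeSet_noEntry (r : V) : ∀ i ∉ treeSet F r, ∀ j, Arc F i j → j ∉ treeSet F r :=
  fun _ hi _ hij hj => hi (.head hij hj)

lemma compl_treeSet_noEntry {r : V} (hr : F r = none) :
    ∀ i ∉ (treeSet F r)ᶜ, ∀ j, Arc F i j → j ∉ (treeSet F r)ᶜ := by
  simpa using fun i hi j hij => treeSet_closed hr hi hij

end Paths

section Exchange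

variable {V : Type*} {F G : V → Option V} {D : Set V} {a b : V}

lemma exchange_of_mem (h : a ∈ D) : exchange D F G a = G a := if_pos h

lemma exchange_of_notMem (h : a ∉ D) : exchange D F G a = F a := if_neg h

lemma exchange_eq_exchange_compl : exchange D F G = exchange Dᶜ G F := by
  funext i
  by_cases h : i ∈ D
  · rw [exchange_of_mem h, exchange_of_notMem (Set.notMem_compl_iff.2 h)]
  · rw [exchange_of_notMem h, exchange_of_mem h]

section NoEntry

variable (hD : ∀ i ∉ D, ∀ j, Arc F i j → j ∉ D)
include hD

lemma reaches_of_reaches_exchange_of_notMem (h : Reaches (exchange D F G) a b) (ha : a ∉ D) :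
    Reaches F a b ∧ b ∉ D := by
  induction h using ReflTransGen.head_induction_on with
  | refl => exact ⟨.refl, ha⟩
  | @head a c hac _ ih =>
    rw [Arc, exchange_of_notMem ha] at hac
    obtain ⟨hcb, hb⟩ := ih (hD a ha c hac)
    exact ⟨.head hac hcb, hb⟩

lemma reaches_of_reaches_exchange_of_mem (h : Reaches (exchange D F G) a b) (hb : b ∈ D) :
    a ∈ D ∧ Reaches G a b := by
  induction h using ReflTransGen.head_induction_on with
  | refl => exact ⟨hb, .refl⟩
  | @head a c hac _ ih =>
    obtain ⟨hc, hcb⟩ := ih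
    by_cases ha : a ∈ D
    · rw [Arc, exchange_of_mem ha] at hac
      exact ⟨ha, .head hac hcb⟩
    · rw [Arc, exchange_of_notMem ha] at hac
      exact absurd hc (hD a ha c hac)

lemma reaches_exchange_of_reaches (h : Reaches F a b) (ha : a ∉ D) :
    Reaches (exchange D F G) a b := by
  induction h using ReflTransGen.head_induction_on with
  | refl => exact .refl
  | @head a c hac _ ih =>
    refine .head ?_ (ih (hD a ha c hac))
    rwa [Arc, exchange_of_notMem ha]

lemma treeSet_exchange_subset {σ : V} (hσ : σ ∈ D) :
    treeSet (exchange D F G) σ ⊆ D ∩ treeSet G σ :=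
  fun _ hx => reaches_of_reaches_exchange_of_mem hD hx hσ

lemma isForest_exchange (hF : IsForest F) (hG : IsForest G) : IsForest (exchange D F G) := by
  intro c hc
  obtain ⟨y, hcy, hyc⟩ := TransGen.head'_iff.mp hc
  by_cases hcD : c ∈ D
  · rw [Arc, exchange_of_mem hcD] at hcy
    exact hG c (.head' hcy (reaches_of_reaches_exchange_of_mem hD hyc hcD).2)
  · rw [Arc, exchange_of_notMem hcD] at hcy
    exact hF c (.head' hcy (reaches_of_reaches_exchange_of_notMem hD hyc (hD c hcD y hcy)).1)

end NoEntry

lemma sum_exchange_add_sum_exchange {M : Type*} [AddCommMonoid M] [Fintype V]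
    (g : V → Option V → M) (D : Set V) (F G : V → Option V) :
    ∑ i, g i (exchange D F G i) + ∑ i, g i (exchange D G F i) =
      ∑ i, g i (F i) + ∑ i, g i (G i) := by
  rw [← Finset.sum_add_distrib, ← Finset.sum_add_distrib]
  refine Finset.sum_congr rfl fun i _ => ?_
  by_cases h : i ∈ D
  · rw [exchange_of_mem h, exchange_of_mem h, add_comm]
  · rw [exchange_of_notMem h, exchange_of_notMem h]

end Exchange

section Counting

variable {V : Type*} {A : V → V → Prop} {w : V → V → ℝ} {k : ℕ} {F G H : V → Option V}

lemma isSpanningForest_exchange {D : Set V} (hF : IsSpanningForest A F)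
    (hG : IsSpanningForest A G) (hD : ∀ i ∉ D, ∀ j, Arc F i j → j ∉ D) :
    IsSpanningForest A (exchange D F G) := by
  refine ⟨isForest_exchange hD hF.1 hG.1, fun i j hij => ?_⟩
  by_cases h : i ∈ D
  · rw [exchange_of_mem h] at hij
    exact hG.2 i j hij
  · rw [exchange_of_notMem h] at hij
    exact hF.2 i j hij

lemma isSpanningForest_exchange_treeSet (hH : IsSpanningForest A H) (hG : IsSpanningForest A G)
    {ρ : V} (hρ : H ρ = none) :
    IsSpanningForest A (exchange (treeSet H ρ) H G) ∧
      IsSpanningForest A (exchange (treeSet H ρ) G H) := by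
  refine ⟨isSpanningForest_exchange hH hG (treeSet_noEntry ρ), ?_⟩
  rw [exchange_eq_exchange_compl]
  exact isSpanningForest_exchange hH hG (compl_treeSet_noEntry hρ)

variable [Fintype V]

lemma weight_exchange_add (w : V → V → ℝ) (D : Set V) (F G : V → Option V) :
    weight w (exchange D F G) + weight w (exchange D G F) = weight w F + weight w G :=
  sum_exchange_add_sum_exchange (fun i o => o.elim 0 (w i)) D F G

lemma numTrees_eq_sum (F : V → Option V) :
    numTrees F = ∑ i, if F i = none then 1 else 0 :=
  Finset.card_filter _ _

lemma numTrees_exchange_add (D : Set V) (F G : V → Option V) :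
    numTrees (exchange D F G) + numTrees (exchange D G F) = numTrees F + numTrees G := by
  simp only [numTrees_eq_sum]
  exact sum_exchange_add_sum_exchange (fun _ o => if o = none then 1 else 0) D F G

lemma numTrees_eq_ncard (F : V → Option V) : numTrees F = {i | F i = none}.ncard := by
  rw [numTrees, ← Set.ncard_coe_finset, Finset.coe_filter]
  simp

lemma numTrees_exchange_treeSet {ρ : V} (hρ : H ρ = none) (G : V → Option V) :
    numTrees (exchange (treeSet H ρ) H G) + 1 =
      numTrees H + (treeSet H ρ ∩ {i | G i = none}).ncard := by
  have hroots : {i | exchange (treeSet H ρ) H G i = none} =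
      (treeSet H ρ ∩ {i | G i = none}) ∪ ({i | H i = none} \ {ρ}) := by
    ext i
    by_cases hi : i ∈ treeSet H ρ
    · have : H i = none → i = ρ := fun h => eq_of_reaches_of_eq_none h hi
      simp only [Set.mem_ofPred_eq, exchange_of_mem hi, Set.mem_union, Set.mem_inter_iff, hi,
        true_and, Set.mem_sdiff, Set.mem_singleton_iff]
      exact ⟨.inl, fun h => h.resolve_right fun ⟨hHi, hne⟩ => hne (this hHi)⟩
    · have : i ≠ ρ := fun h => hi (h ▸ .refl)
      simp [exchange_of_notMem hi, hi, this]
  have hdisj : Disjoint (treeSet H ρ ∩ {i | G i = none}) ({i | H i = none} \ {ρ}) :=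
    Set.disjoint_left.2 fun i ⟨hi, _⟩ ⟨hHi, hiρ⟩ => hiρ (eq_of_reaches_of_eq_none hHi hi)
  rw [numTrees_eq_ncard, numTrees_eq_ncard, hroots, Set.ncard_union_eq hdisj, add_assoc,
    Set.ncard_sdiff_singleton_add_one (s := {i | H i = none}) hρ, add_comm]

lemma phi_le (hF : IsSpanningForest A F) : phi A w (numTrees F) ≤ weight w F :=
  csInf_le ((Set.toFinite _).image _).bddBelow ⟨F, ⟨hF, rfl⟩, rfl⟩

lemma ExtremeForest.weight_eq (hF : ExtremeForest A w k F) : weight w F = phi A w k := by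
  refine le_antisymm ?_ (hF.2.1 ▸ phi_le hF.1)
  refine le_csInf ⟨weight w F, F, ⟨hF.1, hF.2.1⟩, rfl⟩ ?_
  rintro _ ⟨G, ⟨hG, hGk⟩, rfl⟩
  exact hF.2.2 G hG hGk

lemma extremeForest_of_weight_le (hF : IsSpanningForest A F) (hFk : numTrees F = k)
    (hw : weight w F ≤ phi A w k) : ExtremeForest A w k F :=
  ⟨hF, hFk, fun _ hG hGk => hw.trans (hGk ▸ phi_le hG)⟩

end Counting

section Convexity

variable {V : Type*} [Fintype V] {A : V → V → Prop} {w : V → V → ℝ} {k : ℕ}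
  {G H : V → Option V} {ρ : V}
  (hlt : phi A w (k - 1) - phi A w k > phi A w k - phi A w (k + 1))
include hlt

theorem exists_root_mem_treeSet (hH : ExtremeForest A w k H)
    (hG : ExtremeForest A w k G) (hρ : H ρ = none) : ∃ s ∈ treeSet H ρ, G s = none := by
  by_contra! hno
  obtain ⟨hL, hK⟩ := isSpanningForest_exchange_treeSet hH.1 hG.1 hρ
  have hLk : numTrees (exchange (treeSet H ρ) H G) + 1 = k := by
    have hU : treeSet H ρ ∩ {i | G i = none} = ∅ :=
      Set.eq_empty_of_forall_notMem fun i hi => hno i hi.1 hi.2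
    simpa [hU, hH.2.1] using numTrees_exchange_treeSet hρ G
  have hLK := numTrees_exchange_add (treeSet H ρ) H G
  rw [hH.2.1, hG.2.1] at hLK
  have hL' : numTrees (exchange (treeSet H ρ) H G) = k - 1 := by omega
  have hK' : numTrees (exchange (treeSet H ρ) G H) = k + 1 := by omega
  have hw := weight_exchange_add w (treeSet H ρ) H G
  rw [hH.weight_eq, hG.weight_eq] at hw
  linarith [hL' ▸ phi_le (w := w) hL, hK' ▸ phi_le (w := w) hK]

-- Pigeonhole: each of the `k` trees of `H` contains one of the `k` roots of `G`.
theorem eq_of_mem_treeSet_of_eq_none (hH : ExtremeForest A w k H)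
    (hG : ExtremeForest A w k G) (hρ : H ρ = none) {s₁ s₂ : V} (h₁ : s₁ ∈ treeSet H ρ)
    (hs₁ : G s₁ = none) (h₂ : s₂ ∈ treeSet H ρ) (hs₂ : G s₂ = none) : s₁ = s₂ := by
  choose root hroot hreach using hH.1.1.exists_root
  refine Finset.inj_on_of_surj_on_of_card_le (s := .filter (G · = none) .univ)
    (t := .filter (H · = none) .univ) (fun s _ => root s) (fun s _ => by simpa using hroot s)
    (fun ρ' hρ' => ?_) (hG.2.1.trans hH.2.1.symm).le (by simpa using hs₁) (by simpa using hs₂) ?_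
  · have hρ' : H ρ' = none := by simpa using hρ'
    obtain ⟨s, hs, hsG⟩ := exists_root_mem_treeSet hlt hH hG hρ'
    exact ⟨s, by simpa using hsG, root_unique (hreach s) hs (hroot s) hρ'⟩
  · rw [root_unique (hreach s₁) h₁ (hroot s₁) hρ, root_unique (hreach s₂) h₂ (hroot s₂) hρ]

theorem extremeForest_exchange_treeSet (hH : ExtremeForest A w k H)
    (hG : ExtremeForest A w k G) (hρ : H ρ = none) :
    ExtremeForest A w k (exchange (treeSet H ρ) H G) := by
  obtain ⟨hL, hK⟩ := isSpanningForest_exchange_treeSet hH.1 hG.1 hρ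
  obtain ⟨σ, hσU, hσ⟩ := exists_root_mem_treeSet hlt hH hG hρ
  have hLk : numTrees (exchange (treeSet H ρ) H G) = k := by
    have hU : treeSet H ρ ∩ {i | G i = none} = {σ} := Set.eq_singleton_iff_unique_mem.2
      ⟨⟨hσU, hσ⟩, fun s hs => eq_of_mem_treeSet_of_eq_none hlt hH hG hρ hs.1 hs.2 hσU hσ⟩
    simpa [hU, hH.2.1] using numTrees_exchange_treeSet hρ G
  have hKk : numTrees (exchange (treeSet H ρ) G H) = k := by
    have := numTrees_exchange_add (treeSet H ρ) H G
    rw [hLk, hH.2.1, hG.2.1] at this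
    omega
  have hw := weight_exchange_add w (treeSet H ρ) H G
  rw [hH.weight_eq, hG.weight_eq] at hw
  refine extremeForest_of_weight_le hL hLk ?_
  linarith [hKk ▸ phi_le (w := w) hK]

theorem IsMarked.exists_root_exchange_treeSet {i₀ : V} (hi₀ : IsMarked A w k i₀)
    (hH : ExtremeForest A w k H) (hG : ExtremeForest A w k G) (hρ : H ρ = none)
    (hi₀U : i₀ ∈ treeSet H ρ) :
    ∃ σ ∈ treeSet H ρ, exchange (treeSet H ρ) H G σ = none ∧
      i₀ ∈ treeSet (exchange (treeSet H ρ) H G) σ := by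
  obtain ⟨F₀, hF₀, hi₀⟩ := hi₀
  have hL := extremeForest_exchange_treeSet hlt hH hG hρ
  obtain ⟨σ, hσ, hi₀σ⟩ := hL.1.1.exists_root i₀
  refine ⟨σ, ?_, hσ, hi₀σ⟩
  by_contra hσU
  have hHσ : H σ = none := by rwa [exchange_of_notMem hσU] at hσ
  obtain ⟨f, hfσ, hf⟩ := exists_root_mem_treeSet hlt hH hF₀ hHσ
  have hfU : f ∉ treeSet H ρ := fun hfU => hσU (root_unique hfσ hfU hHσ hρ ▸ .refl)
  have hfL : f ∈ treeSet (exchange (treeSet H ρ) H G) σ :=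
    reaches_exchange_of_reaches (treeSet_noEntry ρ) hfσ hfU
  exact hfU (eq_of_mem_treeSet_of_eq_none hlt hL hF₀ hσ hfL hf hi₀σ hi₀ ▸ hi₀U)

end Convexity

lemma IsElementary.subset_of_mem {V : Type*} {m : MeasurableSpace V} {M S : Set V} {i : V}
    (hM : IsElementary m M) (hi : i ∈ M) (hS : @MeasurableSet V m S) (hiS : i ∈ S) : M ⊆ S := by
  rcases hM.2.2 (M ∩ S) (hM.1.inter hS) Set.inter_subset_left with h | h
  · exact absurd (h ▸ Set.mem_inter hi hiS) (Set.notMem_empty i)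
  · exact h ▸ Set.inter_subset_right

lemma mem_iff_mem_of_measurableSet_generateFrom {V : Type*} {C : Set (Set V)} {a b : V}
    (h : ∀ S ∈ C, (a ∈ S ↔ b ∈ S)) {T : Set V}
    (hT : @MeasurableSet V (MeasurableSpace.generateFrom C) T) : a ∈ T ↔ b ∈ T := by
  induction T, hT using MeasurableSpace.generateFrom_induction with
  | hC S hS _ => exact h S hS
  | empty => simp
  | compl t _ ht => simpa only [Set.mem_compl_iff, not_iff_not] using ht
  | iUnion s _ hs => simp only [Set.mem_iUnion, hs]

section Atoms

variable {V : Type*} [Fintype V] {A : V → V → Prop} {w : V → V → ℝ} {k : ℕ} {M : Set V}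
  {i₀ : V}

lemma exists_treeSet_separating (hM : IsElementary (alg A w k) M) (hi₀ : i₀ ∈ M) {x : V}
    (hx : x ∉ M) :
    ∃ G r, ExtremeForest A w k G ∧ G r = none ∧ i₀ ∈ treeSet G r ∧ x ∉ treeSet G r := by
  by_contra! h
  refine hx ((mem_iff_mem_of_measurableSet_generateFrom (C := genSets A w k) ?_ hM.1).1 hi₀)
  rintro _ ⟨F, r, hF, hr, rfl⟩
  refine ⟨h F r hF hr, fun hxr => ?_⟩
  obtain ⟨r', hr', hi₀r'⟩ := hF.1.1.exists_root i₀
  rwa [root_unique (h F r' hF hr' hi₀r') hxr hr' hr] at hi₀r'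

variable (hlt : phi A w (k - 1) - phi A w k > phi A w k - phi A w (k + 1))
  (hM : IsElementary (alg A w k) M) (hi₀M : i₀ ∈ M) (hi₀ : IsMarked A w k i₀)
include hlt hM hi₀M hi₀

theorem exists_extremeForest_treeSet_eq :
    ∃ H, ExtremeForest A w k H ∧ ∃ ρ, H ρ = none ∧ treeSet H ρ = M := by
  obtain ⟨F₀, hF₀, hi₀F₀⟩ := id hi₀
  obtain ⟨_, ⟨⟨H, ρ, hH, hρ, rfl⟩, hi₀U⟩, hmin⟩ :=
    (Set.toFinite {S ∈ genSets A w k | i₀ ∈ S}).exists_minimal ⟨_, ⟨F₀, i₀, hF₀, hi₀F₀, rfl⟩, .refl⟩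
  refine ⟨H, hH, ρ, hρ, subset_antisymm (fun x hxU => ?_)
    (hM.subset_of_mem hi₀M (MeasurableSpace.measurableSet_generateFrom ⟨H, ρ, hH, hρ, rfl⟩) hi₀U)⟩
  by_contra hxM
  obtain ⟨G, r, hG, hr, hi₀r, hxr⟩ := exists_treeSet_separating hM hi₀M hxM
  obtain ⟨σ, hσU, hσ, hi₀σ⟩ := hi₀.exists_root_exchange_treeSet hlt hH hG hρ hi₀U
  have hL := extremeForest_exchange_treeSet hlt hH hG hρ
  have hsub := treeSet_exchange_subset (G := G) (treeSet_noEntry ρ) hσU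
  have hσr : σ = r := root_unique (hsub hi₀σ).2 hi₀r (by rwa [exchange_of_mem hσU] at hσ) hr
  have hUσ := hmin ⟨⟨_, σ, hL, hσ, rfl⟩, hi₀σ⟩ fun _ hy => (hsub hy).1
  exact hxr (hσr ▸ (hsub (hUσ hxU)).2)

theorem mem_of_arc_of_treeSet_eq {H : V → Option V} {ρ : V} (hH : ExtremeForest A w k H)
    (hρ : H ρ = none) (hU : treeSet H ρ = M) {G : V → Option V} (hG : ExtremeForest A w k G)
    {i j : V} (hi : i ∈ M) (hij : Arc G i j) : j ∈ M := by
  subst hU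
  obtain ⟨σ, hσU, hσ, hi₀σ⟩ := hi₀.exists_root_exchange_treeSet hlt hH hG hρ hi₀M
  have hL := extremeForest_exchange_treeSet hlt hH hG hρ
  have hUσ := hM.subset_of_mem hi₀M
    (MeasurableSpace.measurableSet_generateFrom ⟨_, σ, hL, hσ, rfl⟩) hi₀σ
  have hLij : Arc (exchange (treeSet H ρ) H G) i j := by rwa [Arc, exchange_of_mem hi]
  exact (treeSet_exchange_subset (treeSet_noEntry ρ) hσU (treeSet_closed hσ (hUσ hi) hLij)).1

end Atoms

theorem marked_elementary_is_tree_general {V : Type*} [Fintype V]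
    (A : V → V → Prop) (w : V → V → ℝ) (k : ℕ)
    (hlt : phi A w (k - 1) - phi A w k > phi A w k - phi A w (k + 1))
    (M : Set V) (hM : IsElementary (alg A w k) M) (hmark : ∃ i ∈ M, IsMarked A w k i) :
    (∃ F, ExtremeForest A w k F ∧ ∃ r, F r = none ∧ treeSet F r = M) ∧
      ∀ F, ExtremeForest A w k F → ∀ i ∈ M, ∀ j, Arc F i j → j ∈ M := by
  obtain ⟨i₀, hi₀M, hi₀⟩ := hmark
  obtain ⟨H, hH, ρ, hρ, hU⟩ := exists_extremeForest_treeSet_eq hlt hM hi₀M hi₀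
  exact ⟨⟨H, hH, ρ, hρ, hU⟩, fun G hG i hi j hij =>
    mem_of_arc_of_treeSet_eq hlt hM hi₀M hi₀ hH hρ hU hG hi hij⟩

/-- Under the strict convexity inequality, every marked elementary set `M` of `A_k` is the
vertex set of a tree of some minimal-weight spanning `k`-forest, and no minimal-weight
spanning `k`-forest has an arc coming out of `M`. -/
theorem marked_elementary_is_tree {V : Type*} [Fintype V] [DecidableEq V]
    (A : V → V → Prop) (w : V → V → ℝ) (k : ℕ)
    (hk : 2 ≤ k) (hk' : k + 1 ≤ Fintype.card V)
    (hEx : ∃ F, IsSpanningForest A F ∧ numTrees F = k - 1)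
    (hlt : phi A w (k - 1) - phi A w k > phi A w k - phi A w (k + 1))
    (M : Set V) (hM : IsElementary (alg A w k) M) (hmark : ∃ i ∈ M, IsMarked A w k i) :
    (∃ F, ExtremeForest A w k F ∧ ∃ r, F r = none ∧ treeSet F r = M) ∧
      ∀ F, ExtremeForest A w k F → ∀ i ∈ M, ∀ j, Arc F i j → j ∈ M :=
  marked_elementary_is_tree_general A w k hlt M hM hmark
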